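/- Fix an integer n ≥ 1 and real numbers λ, ξ with ξ ≥ n·|λ| and ξ + λ² > 0. Then the vector v₋ = (2a(a−n/2))^{−1/2}·( i·√(((a+n/2+λ)(a−n/2+λ))/2), −i·√(((a+n/2−λ)(a−n/2−λ))/2), √((a−n/2+λ)(a−n/2−λ)) )ᵀ ∈ ℂ³, where a = √(ξ+λ²+n²/4) (so a > n/2), has Euclidean norm 1 and satisfies m₁(λ,ξ)·v₋ = (n/2 − a)·v₋. -/

import Mathlib

open Complex Matrix

/-- The matrix `m₁ = m₁(λ,ξ)` of Lemma 5.2, with rows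
`(−λ, 0, −i√((ξ−nλ)/2))`, `(0, λ, i√((ξ+nλ)/2))`, `(i√((ξ−nλ)/2), −i√((ξ+nλ)/2), n)`. -/
noncomputable def m1 (n : ℕ) (lam ξ : ℝ) : Matrix (Fin 3) (Fin 3) ℂ :=
  !![(-lam : ℂ), 0, -Complex.I * (Real.sqrt ((ξ - n * lam) / 2) : ℂ);
     0, (lam : ℂ), Complex.I * (Real.sqrt ((ξ + n * lam) / 2) : ℂ);
     Complex.I * (Real.sqrt ((ξ - n * lam) / 2) : ℂ),
       -Complex.I * (Real.sqrt ((ξ + n * lam) / 2) : ℂ), (n : ℂ)]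

/-- The unit eigenvector `v₋` of `m₁` for the eigenvalue `n/2 − a`, where
`a = √(ξ+λ²+n²/4)`. -/
noncomputable def vminus (n : ℕ) (lam ξ : ℝ) : Fin 3 → ℂ :=
  ((Real.sqrt (2 * Real.sqrt (ξ + lam ^ 2 + (n : ℝ) ^ 2 / 4) *
      (Real.sqrt (ξ + lam ^ 2 + (n : ℝ) ^ 2 / 4) - n / 2)) : ℂ))⁻¹ •
    ![Complex.I * (Real.sqrt ((Real.sqrt (ξ + lam ^ 2 + (n : ℝ) ^ 2 / 4) + n / 2 + lam) *
        (Real.sqrt (ξ + lam ^ 2 + (n : ℝ) ^ 2 / 4) - n / 2 + lam) / 2) : ℂ),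
      -Complex.I * (Real.sqrt ((Real.sqrt (ξ + lam ^ 2 + (n : ℝ) ^ 2 / 4) + n / 2 - lam) *
        (Real.sqrt (ξ + lam ^ 2 + (n : ℝ) ^ 2 / 4) - n / 2 - lam) / 2) : ℂ),
      (Real.sqrt ((Real.sqrt (ξ + lam ^ 2 + (n : ℝ) ^ 2 / 4) - n / 2 + lam) *
        (Real.sqrt (ξ + lam ^ 2 + (n : ℝ) ^ 2 / 4) - n / 2 - lam)) : ℂ)]

private lemma sqrt_mul_sqrt_aux (x y c z : ℝ) (hx : 0 ≤ x) (hc : 0 ≤ c)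
    (h : x * y = c ^ 2 * z) :
    Real.sqrt x * Real.sqrt y = c * Real.sqrt z := by
  rw [← Real.sqrt_mul hx, h, Real.sqrt_mul (sq_nonneg c), Real.sqrt_sq hc]

set_option maxHeartbeats 1000000 in
/-- Lemma 5.2, eigenvector for `μ₋ = n/2 − a`: for `ξ ≥ n|λ|` and
`ξ + λ² > 0` (so `a > n/2`), the vector `v₋` has Euclidean norm `1` and
`m₁ v₋ = (n/2 − a)·v₋`. -/
theorem stmt_8 (n : ℕ) (hn : 1 ≤ n) (lam ξ : ℝ) (h : (n : ℝ) * |lam| ≤ ξ)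
    (hpos : 0 < ξ + lam ^ 2) :
    ‖(WithLp.equiv 2 (Fin 3 → ℂ)).symm (vminus n lam ξ)‖ = 1 ∧
    (m1 n lam ξ).mulVec (vminus n lam ξ) =
      ((n : ℂ) / 2 - (Real.sqrt (ξ + lam ^ 2 + (n : ℝ) ^ 2 / 4) : ℂ)) • vminus n lam ξ := by
  have hb : (0:ℝ) ≤ ξ + lam ^ 2 + (n : ℝ) ^ 2 / 4 := by have := sq_nonneg (n:ℝ); linarith
  set A := Real.sqrt (ξ + lam ^ 2 + (n : ℝ) ^ 2 / 4) with hAdef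
  have hA2 : A ^ 2 = ξ + lam ^ 2 + (n : ℝ) ^ 2 / 4 := Real.sq_sqrt hb
  have hA0 : (0:ℝ) ≤ A := Real.sqrt_nonneg _
  have hAge : |lam| + (n:ℝ)/2 ≤ A := by
    nlinarith [_root_.sq_abs lam, abs_nonneg lam, sq_nonneg (A - (|lam| + (n:ℝ)/2)),
      sq_nonneg (A + |lam| + (n:ℝ)/2)]
  have hs : (0:ℝ) < A - (n:ℝ)/2 := by nlinarith
  have hp : (0:ℝ) ≤ A - (n:ℝ)/2 + lam := by linarith [neg_abs_le lam]
  have hq : (0:ℝ) ≤ A - (n:ℝ)/2 - lam := by linarith [le_abs_self lam]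
  have hP : (0:ℝ) ≤ A + (n:ℝ)/2 + lam := by linarith [neg_abs_le lam]
  have hQ : (0:ℝ) ≤ A + (n:ℝ)/2 - lam := by linarith [le_abs_self lam]
  have hrw1 : Real.sqrt ((ξ - (n:ℝ) * lam) / 2)
      = Real.sqrt ((A + (n:ℝ)/2 + lam) * (A - (n:ℝ)/2 - lam) / 2) := by
    rw [show (ξ - (n:ℝ) * lam) / 2 = (A + (n:ℝ)/2 + lam) * (A - (n:ℝ)/2 - lam) / 2 by
      linear_combination (-1/2 : ℝ) * hA2]
  have hrw2 : Real.sqrt ((ξ + (n:ℝ) * lam) / 2)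
      = Real.sqrt ((A + (n:ℝ)/2 - lam) * (A - (n:ℝ)/2 + lam) / 2) := by
    rw [show (ξ + (n:ℝ) * lam) / 2 = (A + (n:ℝ)/2 - lam) * (A - (n:ℝ)/2 + lam) / 2 by
      linear_combination (-1/2 : ℝ) * hA2]
  set r1 := Real.sqrt ((A + (n:ℝ)/2 + lam) * (A - (n:ℝ)/2 + lam) / 2) with hr1def
  set r2 := Real.sqrt ((A + (n:ℝ)/2 - lam) * (A - (n:ℝ)/2 - lam) / 2) with hr2def
  set r3 := Real.sqrt ((A - (n:ℝ)/2 + lam) * (A - (n:ℝ)/2 - lam)) with hr3def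
  set u := Real.sqrt ((A + (n:ℝ)/2 + lam) * (A - (n:ℝ)/2 - lam) / 2) with hudef
  set v := Real.sqrt ((A + (n:ℝ)/2 - lam) * (A - (n:ℝ)/2 + lam) / 2) with hvdef
  have h1 : u * r3 = (A - (n:ℝ)/2 - lam) * r1 :=
    sqrt_mul_sqrt_aux _ _ _ _ (div_nonneg (mul_nonneg hP hq) (by norm_num)) hq (by ring)
  have h2 : v * r3 = (A - (n:ℝ)/2 + lam) * r2 :=
    sqrt_mul_sqrt_aux _ _ _ _ (div_nonneg (mul_nonneg hQ hp) (by norm_num)) hp (by ring)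
  have h3 : u * r1 = ((A + (n:ℝ)/2 + lam)/2) * r3 :=
    sqrt_mul_sqrt_aux _ _ _ _ (div_nonneg (mul_nonneg hP hq) (by norm_num))
      (by linarith) (by ring)
  have h4 : v * r2 = ((A + (n:ℝ)/2 - lam)/2) * r3 :=
    sqrt_mul_sqrt_aux _ _ _ _ (div_nonneg (mul_nonneg hQ hp) (by norm_num))
      (by linarith) (by ring)
  have hr1sq : r1 ^ 2 = (A + (n:ℝ)/2 + lam) * (A - (n:ℝ)/2 + lam) / 2 :=
    Real.sq_sqrt (div_nonneg (mul_nonneg hP hp) (by norm_num))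
  have hr2sq : r2 ^ 2 = (A + (n:ℝ)/2 - lam) * (A - (n:ℝ)/2 - lam) / 2 :=
    Real.sq_sqrt (div_nonneg (mul_nonneg hQ hq) (by norm_num))
  have hr3sq : r3 ^ 2 = (A - (n:ℝ)/2 + lam) * (A - (n:ℝ)/2 - lam) :=
    Real.sq_sqrt (mul_nonneg hp hq)
  have hr1n : (0:ℝ) ≤ r1 := Real.sqrt_nonneg _
  have hr2n : (0:ℝ) ≤ r2 := Real.sqrt_nonneg _
  have hr3n : (0:ℝ) ≤ r3 := Real.sqrt_nonneg _
  set c := Real.sqrt (2 * A * (A - (n:ℝ)/2)) with hcdef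
  have hcpos : (0:ℝ) < c := Real.sqrt_pos.mpr (by nlinarith)
  have hc2 : c ^ 2 = 2 * A * (A - (n:ℝ)/2) := Real.sq_sqrt (by nlinarith)
  have hv : vminus n lam ξ = ((c:ℂ))⁻¹ •
      ![Complex.I * (r1 : ℂ), -Complex.I * (r2 : ℂ), (r3 : ℂ)] := by
    unfold vminus
    rw [← hAdef, ← hr1def, ← hr2def, ← hr3def, ← hcdef]
  constructor
  · rw [hv, WithLp.equiv_symm_apply, WithLp.toLp_smul, norm_smul, EuclideanSpace.norm_eq]
    simp only [PiLp.toLp_apply, Fin.sum_univ_three, Matrix.cons_val_zero,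
      Matrix.cons_val_one, Matrix.head_cons, Matrix.cons_val_two, Matrix.tail_cons]
    rw [norm_mul, norm_mul, Complex.norm_I, norm_neg, Complex.norm_I,
      Complex.norm_real, Complex.norm_real, Complex.norm_real]
    simp only [Real.norm_eq_abs, _root_.abs_of_nonneg hr1n, _root_.abs_of_nonneg hr2n, _root_.abs_of_nonneg hr3n,
      one_mul]
    have hsum : r1 ^ 2 + r2 ^ 2 + r3 ^ 2 = c ^ 2 := by
      rw [hr1sq, hr2sq, hr3sq, hc2]; ring
    rw [hsum, Real.sqrt_sq hcpos.le, norm_inv, Complex.norm_real, Real.norm_eq_abs,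
      _root_.abs_of_nonneg hcpos.le]
    exact inv_mul_cancel₀ hcpos.ne'
  · rw [hv, Matrix.mulVec_smul, smul_comm]
    congr 1
    have h1C := congrArg Complex.ofReal h1
    push_cast at h1C
    have h2C := congrArg Complex.ofReal h2
    push_cast at h2C
    have h3C := congrArg Complex.ofReal h3
    push_cast at h3C
    have h4C := congrArg Complex.ofReal h4
    push_cast at h4C
    funext i
    fin_cases i <;>
      simp [m1, Matrix.mulVec, dotProduct, Fin.sum_univ_three, hrw1, hrw2]
    · linear_combination (-Complex.I) * h1C
    · linear_combination Complex.I * h2C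
    · linear_combination ((u:ℂ)*(r1:ℂ) + (v:ℂ)*(r2:ℂ)) * Complex.I_sq - h3C - h4C
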